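/- arXiv:2505.04422 — 10 statements merged into one kernel-verified Lean document; each statement's English description precedes it below -/
import Mathlib

section
/- Let h = 1 and l = 4/3. Define f(k₁,k₂) = 1 − (3/4)k₁ − (9/32)k₂² + I₁·(3k₁² + 3k₂² − 4)²/(32k₂²) − I₂·(3k₁² − 4k₂)²/(32k₂²), where I₁ = 1 if 3k₁² + 3k₂² ≥ 4 and 0 otherwise, and I₂ = 1 if 3k₁² ≤ 4k₂ and 0 otherwise. Then f(k₁,k₂) ≥ 0 for all k₁, k₂ ∈ (0,1]. -/
/-- The function arising from the no-deviation condition between two large players'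
pools in the oceanic Shapley model with `h = 1` and all-small pools of mass `l = 4/3`. -/
noncomputable def f (k₁ k₂ : ℝ) : ℝ :=
  1 - (3 / 4) * k₁ - (9 / 32) * k₂ ^ 2
    + (if 4 ≤ 3 * k₁ ^ 2 + 3 * k₂ ^ 2 then (3 * k₁ ^ 2 + 3 * k₂ ^ 2 - 4) ^ 2 / (32 * k₂ ^ 2) else 0)
    - (if 3 * k₁ ^ 2 ≤ 4 * k₂ then (3 * k₁ ^ 2 - 4 * k₂) ^ 2 / (32 * k₂ ^ 2) else 0)

set_option maxHeartbeats 1000000 in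
/-- `f(k₁,k₂) ≥ 0` for all `k₁, k₂ ∈ (0,1]`. -/
theorem f_nonneg (k₁ k₂ : ℝ) (h₁ : k₁ ∈ Set.Ioc (0 : ℝ) 1) (h₂ : k₂ ∈ Set.Ioc (0 : ℝ) 1) :
    0 ≤ f k₁ k₂ := by
  obtain ⟨h1a, h1b⟩ := h₁
  obtain ⟨h2a, h2b⟩ := h₂
  have hk : (0:ℝ) < 32 * k₂ ^ 2 := by positivity
  unfold f
  split_ifs with hI1 hI2 hI2
  · -- both indicators on
    have hR : 0 ≤ 8 + 8*k₂ + 24*k₁ + 24*k₁*k₂ - 42*k₁^2 - 18*k₁^2*k₂ := by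
      nlinarith [mul_nonneg (sub_nonneg.2 h1b) h2a.le, mul_nonneg (sub_nonneg.2 hI2) h2a.le,
        mul_nonneg (sub_nonneg.2 hI2) h1a.le, sub_nonneg.2 hI2, sub_nonneg.2 h1b,
        mul_nonneg (sub_nonneg.2 h1b) (sub_nonneg.2 h1b), mul_pos h1a h2a]
    have hP : 0 ≤ 32 * k₂ ^ 2 - 24 * k₁ * k₂ ^ 2 - 9 * k₂ ^ 4
        + (3 * k₁ ^ 2 + 3 * k₂ ^ 2 - 4) ^ 2 - (3 * k₁ ^ 2 - 4 * k₂) ^ 2 := by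
      nlinarith [sq_nonneg (3*k₁ - 2), mul_nonneg (sub_nonneg.2 h2b) hR]
    have heq : 1 - (3 / 4) * k₁ - (9 / 32) * k₂ ^ 2
        + (3 * k₁ ^ 2 + 3 * k₂ ^ 2 - 4) ^ 2 / (32 * k₂ ^ 2)
        - (3 * k₁ ^ 2 - 4 * k₂) ^ 2 / (32 * k₂ ^ 2)
        = (32 * k₂ ^ 2 - 24 * k₁ * k₂ ^ 2 - 9 * k₂ ^ 4
          + (3 * k₁ ^ 2 + 3 * k₂ ^ 2 - 4) ^ 2 - (3 * k₁ ^ 2 - 4 * k₂) ^ 2) / (32 * k₂ ^ 2) := by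
      field_simp
      ring
    rw [heq]
    exact div_nonneg hP hk.le
  · -- only first indicator: then 4k₂ < 3k₁² ≤ 3, so k₂ < 3/4
    have hA : 0 ≤ (3 * k₁ ^ 2 + 3 * k₂ ^ 2 - 4) ^ 2 / (32 * k₂ ^ 2) := by positivity
    push_neg at hI2
    have hk2 : k₂ < 3/4 := by nlinarith [sq_nonneg k₁]
    nlinarith [hA, sq_nonneg k₂, mul_pos h2a h2a]
  · -- only second indicator
    push_neg at hI1
    have hH1 : 0 ≤ k₁^2 * (1 - k₂) * (24*k₂ - 9*k₁^2 - 9*k₁^2*k₂) := by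
      have h9 : 9*k₁^2 + 9*k₁^2*k₂ ≤ 24*k₂ := by nlinarith [mul_nonneg (sub_nonneg.2 hI2) h2a.le]
      have : (0:ℝ) ≤ k₁^2 * (1 - k₂) := mul_nonneg (sq_nonneg k₁) (by linarith)
      nlinarith [mul_nonneg this (by linarith : (0:ℝ) ≤ 24*k₂ - 9*k₁^2 - 9*k₁^2*k₂)]
    have hq : 0 ≤ 16 - 24*k₁ + 24*k₁^2 - 9*k₁^4 - 9*k₂^2 := by
      -- use 9k₂² ≤ (3/2)(4-3k₁²-3k₂²)·? : certificate with a = 3/2, b = 9/2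
      have hr : 0 ≤ (11:ℝ)/2 - 24*k₁ + (57:ℝ)/2*k₁^2 - 9*k₁^4 := by
        nlinarith [sq_nonneg (2*k₁ - 1), mul_nonneg (sq_nonneg (2*k₁ - 1)) (sub_nonneg.2 h1b),
          mul_nonneg (mul_nonneg (sq_nonneg (2*k₁ - 1)) (sub_nonneg.2 h1b)) h1a.le,
          sq_nonneg (k₁ - 1), mul_nonneg h1a.le (sq_nonneg (k₁ - 1))]
      nlinarith [hr, mul_nonneg (sub_nonneg.2 h2b) (sub_nonneg.2 h2b),
        mul_nonneg (sub_nonneg.2 h2b) h2a.le]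
    have hP : 0 ≤ 32 * k₂ ^ 2 - 24 * k₁ * k₂ ^ 2 - 9 * k₂ ^ 4 - (3 * k₁ ^ 2 - 4 * k₂) ^ 2 := by
      nlinarith [hH1, mul_nonneg (sq_nonneg k₂) hq]
    have heq : 1 - (3 / 4) * k₁ - (9 / 32) * k₂ ^ 2 + 0
        - (3 * k₁ ^ 2 - 4 * k₂) ^ 2 / (32 * k₂ ^ 2)
        = (32 * k₂ ^ 2 - 24 * k₁ * k₂ ^ 2 - 9 * k₂ ^ 4
          - (3 * k₁ ^ 2 - 4 * k₂) ^ 2) / (32 * k₂ ^ 2) := by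
      field_simp
      ring
    rw [heq]
    exact div_nonneg hP hk.le
  · -- neither indicator: again k₂ < 3/4
    push_neg at hI2
    have hk2 : k₂ < 3/4 := by nlinarith [sq_nonneg k₁]
    nlinarith [sq_nonneg k₂, mul_pos h2a h2a]
end

section
/- Let h = 1, l ≥ 4/3, and for each large player i set kᵢ so that aᵢ = h − kᵢ²/l. Then (kᵢ + aᵢ − h)/kᵢ ≥ aᵢ/l, i.e., no large player gains by moving to an all-small pool; for l = 4/3 this inequality reduces to (3kᵢ/4 − 1/2)² ≥ 0. -/
/-- With `h = 1`, `l ≥ 4/3` and `aᵢ = h - kᵢ²/l`, a large player does not gain by moving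
to an all-small pool: `(kᵢ + aᵢ - h)/kᵢ ≥ aᵢ/l`; for `l = 4/3` the inequality reduces to
`(3kᵢ/4 - 1/2)² ≥ 0`. -/
theorem no_gain_move_to_small
    (l k a : ℝ) (hl : 4 / 3 ≤ l) (hk : 0 < k) (hk1 : k ≤ 1) (ha : a = 1 - k ^ 2 / l) :
    (k + a - 1) / k ≥ a / l ∧
    (l = 4 / 3 → ((k + a - 1) / k ≥ a / l ↔ (3 * k / 4 - 1 / 2) ^ 2 ≥ 0)) := by
  have hl0 : (0:ℝ) < l := by linarith
  have main : (k + a - 1) / k ≥ a / l := by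
    rw [ge_iff_le, div_le_div_iff₀ hl0 hk, ha]
    have h4 : (0:ℝ) ≤ l * (3 * l - 4) := by nlinarith
    have hlk : k ^ 2 / l * l = k ^ 2 := div_mul_cancel₀ _ hl0.ne'
    nlinarith [sq_nonneg (2 * k - l), mul_pos hk hl0]
  exact ⟨main, fun _ => ⟨fun _ => sq_nonneg _, fun _ => main⟩⟩
end

section
/- In the Nash equilibria where h = 1 and aᵢ = 1 − (3/4)kᵢ², the Shapley reward of a large player, (aᵢ − 1 + kᵢ)/kᵢ, exceeds her proportional share aᵢ/(aᵢ + kᵢ) by exactly kᵢ(3kᵢ − 2)²/(4(2 − kᵢ)(3kᵢ + 2)), which is nonnegative for kᵢ ∈ (0,1]. -/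
/-!
With `a = 1 - (3/4)k²` the pool size factors as `a + k = (2 - k)(3k + 2)/4` and the Shapley
reward simplifies to `1 - (3/4)k`, so the gap is a single rational function of `k`; its numerator
`k(3k - 2)²` and denominator `4(2 - k)(3k + 2)` are both nonnegative on `[0, 2]`.
-/

theorem shapley_stake_add_mass (k : ℝ) :
    1 - 3 / 4 * k ^ 2 + k = (2 - k) * (3 * k + 2) / 4 := by
  ring

theorem shapley_reward_eq {k : ℝ} (hk : k ≠ 0) :
    (1 - 3 / 4 * k ^ 2 - 1 + k) / k = 1 - 3 / 4 * k := by
  field_simp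
  ring

theorem shapley_sub_proportional_eq {k : ℝ} (hk : k ≠ 0) (hk2 : 2 - k ≠ 0)
    (hk3 : 3 * k + 2 ≠ 0) :
    (1 - 3 / 4 * k ^ 2 - 1 + k) / k - (1 - 3 / 4 * k ^ 2) / (1 - 3 / 4 * k ^ 2 + k) =
      k * (3 * k - 2) ^ 2 / (4 * (2 - k) * (3 * k + 2)) := by
  rw [shapley_reward_eq hk, shapley_stake_add_mass]
  field_simp
  ring

theorem shapley_sub_proportional_nonneg {k : ℝ} (hk : 0 ≤ k) (hk2 : k ≤ 2) :
    0 ≤ k * (3 * k - 2) ^ 2 / (4 * (2 - k) * (3 * k + 2)) := by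
  have : 0 ≤ 2 - k := by linarith
  positivity

/-- In the Nash equilibria with `h = 1` and `aᵢ = 1 - (3/4)kᵢ²`, the Shapley reward
`(aᵢ - 1 + kᵢ)/kᵢ` exceeds the proportional share `aᵢ/(aᵢ + kᵢ)` by exactly
`kᵢ(3kᵢ - 2)²/(4(2 - kᵢ)(3kᵢ + 2))`, which is nonnegative for `kᵢ ∈ (0,1]`. -/
theorem shapley_exceeds_proportional
    (k a : ℝ) (hk : 0 < k) (hk1 : k ≤ 1) (ha : a = 1 - (3 / 4) * k ^ 2) :
    (a - 1 + k) / k - a / (a + k) = k * (3 * k - 2) ^ 2 / (4 * (2 - k) * (3 * k + 2)) ∧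
    0 ≤ k * (3 * k - 2) ^ 2 / (4 * (2 - k) * (3 * k + 2)) := by
  subst ha
  exact ⟨shapley_sub_proportional_eq hk.ne' (by linarith) (by linarith),
    shapley_sub_proportional_nonneg hk.le (by linarith)⟩
end

section
/- In the atomic model, consider a winning pool S consisting of one large player of stake a and k small players of stake 1 each, with threshold h, a < h. If k < h and k + a ≥ h, the Shapley value of the large player is (k − h + a + 1)/(k + 1) and each small player receives (h − a)/(k(k+1)); if k ≥ h, the large player gets a/(k+1) and each small player gets (k + 1 − a)/(k(k+1)). In both cases the payoffs sum to 1. -/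
/-!
The marginal contribution of the large player to a coalition of `j` small players is `1` exactly
when `h - a ≤ j < h`, and in the Shapley formula each coalition size `j ≤ k` carries total
weight `1/(k+1)`; so the large player gets `1/(k+1)` times the number of such `j`. The small
players are interchangeable, hence paid equally, and by efficiency they share `1 - φ₀`.
-/

open Finset

/-- Threshold reward function: a coalition gets reward 1 iff its total stake reaches `h`. -/
noncomputable def poolReward {n : ℕ} (w : Fin n → ℝ) (h : ℝ) (T : Finset (Fin n)) : ℝ :=
  if h ≤ ∑ j ∈ T, w j then 1 else 0

/-- The (atomic) Shapley value of player `i` in the pool of all `n` players. -/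
noncomputable def shapley {n : ℕ} (w : Fin n → ℝ) (h : ℝ) (i : Fin n) : ℝ :=
  ∑ T ∈ ((univ : Finset (Fin n)).erase i).powerset,
    ((Nat.factorial T.card * Nat.factorial (n - T.card - 1) : ℕ) : ℝ) / (Nat.factorial n : ℝ) *
      (poolReward w h (insert i T) - poolReward w h T)

open Nat

noncomputable def shapleyCoeff (n t : ℕ) : ℝ := ((t ! * (n - t - 1)! : ℕ) : ℝ) / n !

noncomputable def shapleyValue {n : ℕ} (v : Finset (Fin n) → ℝ) (i : Fin n) : ℝ :=
  ∑ T ∈ (univ.erase i).powerset, shapleyCoeff n #T * (v (insert i T) - v T)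

theorem shapley_eq_shapleyValue {n : ℕ} (w : Fin n → ℝ) (h : ℝ) :
    shapley w h = shapleyValue (poolReward w h) := rfl

theorem choose_mul_shapleyCoeff {m t : ℕ} (ht : t ≤ m) :
    (m.choose t : ℝ) * shapleyCoeff (m + 1) t = 1 / (m + 1) := by
  have hm : (m + 1)! = (m + 1) * (m.choose t * t ! * (m - t)!) := by
    rw [choose_mul_factorial_mul_factorial ht, factorial_succ]
  have hchoose : (m.choose t : ℝ) ≠ 0 := by exact_mod_cast (choose_pos ht).ne'
  rw [shapleyCoeff, show m + 1 - t - 1 = m - t by omega, hm]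
  push_cast
  field_simp

/-- With `s = #S`, the left side is the coefficient of `v S` in `∑ i, shapleyValue v i`. -/
theorem shapleyCoeff_efficiency {n s : ℕ} (hs : s ≤ n) :
    (s : ℝ) * shapleyCoeff n (s - 1) - ((n - s : ℕ) : ℝ) * shapleyCoeff n s =
      (if s = n then 1 else 0) - (if s = 0 then 1 else 0) := by
  obtain ⟨r, rfl⟩ := Nat.exists_eq_add_of_le hs
  rcases s with _ | t <;> rcases r with _ | r
  · simp
  · simp [shapleyCoeff, factorial_succ, field]
  · simp [shapleyCoeff, factorial_succ, field]
  · simp only [shapleyCoeff, show t + 1 + (r + 1) - (t + 1) = r + 1 by omega,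
      show t + 1 - 1 = t by omega, show t + 1 + (r + 1) - t - 1 = r + 1 by omega,
      if_neg (by omega : t + 1 ≠ t + 1 + (r + 1)), if_neg (by omega : t + 1 ≠ 0), factorial_succ]
    push_cast
    ring

section ShapleyValue

variable {n : ℕ} (v : Finset (Fin n) → ℝ)

theorem shapleyValue_perm (σ : Equiv.Perm (Fin n)) (hv : ∀ T, v (T.map σ.toEmbedding) = v T)
    (i : Fin n) : shapleyValue v (σ i) = shapleyValue v i := by
  refine (sum_equiv σ.finsetCongr (fun T => ?_) (fun T _ => ?_)).symm
  · simp [subset_erase]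
  · simp [← hv (insert i T), ← hv T, map_insert]

theorem shapleyValue_eq_of_marginal_eq {i : Fin n} (f : ℕ → ℝ)
    (hf : ∀ T ⊆ univ.erase i, v (insert i T) - v T = f #T) :
    shapleyValue v i = (∑ t ∈ range n, f t) / n := by
  obtain ⟨m, rfl⟩ : ∃ m, n = m + 1 := ⟨n - 1, by have := i.pos; omega⟩
  have hcard : #(univ.erase i) = m := by simp
  rw [shapleyValue, sum_powerset, hcard, sum_div]
  refine sum_congr rfl fun t ht => ?_
  rw [sum_congr rfl fun T hT => by rw [hf T (mem_powersetCard.1 hT).1, (mem_powersetCard.1 hT).2],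
    sum_const, card_powersetCard, hcard, nsmul_eq_mul, ← mul_assoc,
    choose_mul_shapleyCoeff (by simpa [Nat.lt_succ_iff] using ht)]
  push_cast
  ring

theorem sum_shapleyValue : ∑ i, shapleyValue v i = v univ - v ∅ := by
  have hins (i : Fin n) : ∑ T ∈ (univ.erase i).powerset, shapleyCoeff n #T * v (insert i T) =
      ∑ S ∈ univ.filter (i ∈ ·), shapleyCoeff n (#S - 1) * v S := by
    refine sum_nbij' (insert i) (erase · i) ?_ ?_ ?_ ?_ ?_ <;> intro T hT
    · simp
    · simp [subset_erase]
    · simp only [mem_powerset, subset_erase, subset_univ, true_and] at hT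
      exact erase_insert hT
    · simp only [mem_filter, mem_univ, true_and] at hT
      exact insert_erase hT
    · simp only [mem_powerset, subset_erase, subset_univ, true_and] at hT
      simp [card_insert_of_notMem hT]
  have hjoin : ∑ i, ∑ T ∈ (univ.erase i).powerset, shapleyCoeff n #T * v (insert i T) =
      ∑ S, (#S : ℝ) * shapleyCoeff n (#S - 1) * v S := by
    simp only [hins]
    rw [sum_comm' (t' := univ) (s' := fun S => S) (by simp)]
    simp [mul_assoc]
  have hleave : ∑ i, ∑ T ∈ (univ.erase i).powerset, shapleyCoeff n #T * v T =
      ∑ T, ((n - #T : ℕ) : ℝ) * shapleyCoeff n #T * v T := by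
    rw [sum_comm' (t' := univ) (s' := fun T => Tᶜ) (by simp [subset_erase])]
    simp [card_compl, mul_assoc]
  calc ∑ i, shapleyValue v i
      = ∑ S, ((#S : ℝ) * shapleyCoeff n (#S - 1) - ((n - #S : ℕ) : ℝ) * shapleyCoeff n #S) * v S := by
        simp only [shapleyValue, mul_sub, sum_sub_distrib, hjoin, hleave, sub_mul]
    _ = ∑ S, ((if S = univ then 1 else 0) - (if S = ∅ then 1 else 0)) * v S := by
        refine sum_congr rfl fun S _ => ?_
        have huniv : #S = n ↔ S = univ := by rw [← card_eq_iff_eq_univ, Fintype.card_fin]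
        rw [shapleyCoeff_efficiency (by simpa using card_le_univ S)]
        simp only [huniv, Finset.card_eq_zero]
    _ = v univ - v ∅ := by simp [sub_mul, sum_sub_distrib, ite_mul]

end ShapleyValue

section PoolGame

variable {n : ℕ} {w : Fin n → ℝ} {h : ℝ}

theorem poolReward_insert_sub {i : Fin n} {T : Finset (Fin n)} (hi : i ∉ T) (hw : 0 ≤ w i) :
    poolReward w h (insert i T) - poolReward w h T =
      if ∑ j ∈ T, w j < h ∧ h ≤ ∑ j ∈ T, w j + w i then 1 else 0 := by
  rw [poolReward, poolReward, sum_insert hi, add_comm (w i)]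
  by_cases hT : h ≤ ∑ j ∈ T, w j
  · simp [hT, hT.trans (le_add_of_nonneg_right hw), not_lt.2 hT]
  · simp [hT, not_le.1 hT]

theorem shapley_eq_of_stake_eq {i j : Fin n} (hij : w i = w j) : shapley w h i = shapley w h j := by
  have hσ (x : Fin n) : w (Equiv.swap i j x) = w x := by
    rw [Equiv.swap_apply_def]
    split_ifs <;> simp_all
  rw [shapley_eq_shapleyValue, ← Equiv.swap_apply_left i j]
  exact (shapleyValue_perm _ _ (fun T => by simp [poolReward, sum_map, hσ]) i).symm

theorem sum_shapley_eq_one (hh : 0 < h) (hwin : h ≤ ∑ j, w j) : ∑ i, shapley w h i = 1 := by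
  simp [shapley_eq_shapleyValue, sum_shapleyValue, poolReward, hwin, not_le.2 hh]

end PoolGame

section OneLargePlayer

variable {k a h : ℕ} {w : Fin (k + 1) → ℝ}

theorem sum_eq_card_of_zero_notMem (hw1 : ∀ i, i ≠ 0 → w i = 1) {T : Finset (Fin (k + 1))}
    (h0T : 0 ∉ T) : ∑ j ∈ T, w j = #T := by
  rw [card_eq_sum_ones, Nat.cast_sum, Nat.cast_one]
  exact sum_congr rfl fun j hj => hw1 j (ne_of_mem_of_not_mem hj h0T)

theorem shapley_large_eq (hw0 : w 0 = a) (hw1 : ∀ i, i ≠ 0 → w i = 1) :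
    shapley w h 0 = ((min h (k + 1) - (h - a) : ℕ) : ℝ) / (k + 1) := by
  have hmarg : ∀ T ⊆ univ.erase 0, poolReward w h (insert 0 T) - poolReward w h T =
      if (#T : ℝ) < h ∧ (h : ℝ) ≤ #T + a then 1 else 0 := by
    intro T hT
    have h0T : (0 : Fin (k + 1)) ∉ T := (subset_erase.1 hT).2
    rw [poolReward_insert_sub h0T (by simp [hw0]), sum_eq_card_of_zero_notMem hw1 h0T, hw0]
  have hpivotal : {t ∈ range (k + 1) | ((t : ℕ) : ℝ) < h ∧ (h : ℝ) ≤ t + a} =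
      Ico (h - a) (min h (k + 1)) := by
    ext t
    simp only [mem_filter, mem_range, mem_Ico]
    norm_cast
    omega
  rw [shapley_eq_shapleyValue, shapleyValue_eq_of_marginal_eq _
    (fun t : ℕ => if (t : ℝ) < h ∧ (h : ℝ) ≤ t + a then 1 else 0) hmarg, sum_boole, hpivotal,
    Nat.card_Ico]
  push_cast
  rfl

theorem sum_stakes_eq (hw0 : w 0 = a) (hw1 : ∀ i, i ≠ 0 → w i = 1) : ∑ j, w j = a + k := by
  simp [Fin.sum_univ_succ, hw0, hw1 _ (Fin.succ_ne_zero _)]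

theorem natCast_ne_zero_of_fin_ne_zero {i : Fin (k + 1)} (hi : i ≠ 0) : (k : ℝ) ≠ 0 :=
  Nat.cast_ne_zero.2 (by rintro rfl; exact hi (Fin.fin_one_eq_zero i))

theorem shapley_small_eq (hw0 : w 0 = a) (hw1 : ∀ i, i ≠ 0 → w i = 1) (hh : 0 < h)
    (hwin : h ≤ a + k) {i : Fin (k + 1)} (hi : i ≠ 0) :
    shapley w h i = (1 - shapley w h 0) / k := by
  have hsum := sum_shapley_eq_one (w := w) (h := h) (by exact_mod_cast hh)
    (by rw [sum_stakes_eq hw0 hw1]; exact_mod_cast hwin)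
  rw [Fin.sum_univ_succ, sum_congr rfl fun j _ =>
    shapley_eq_of_stake_eq ((hw1 _ (Fin.succ_ne_zero j)).trans (hw1 i hi).symm)] at hsum
  simp only [sum_const, Finset.card_fin, nsmul_eq_mul] at hsum
  rw [eq_div_iff (natCast_ne_zero_of_fin_ne_zero hi)]
  linarith

end OneLargePlayer

theorem shapley_one_large_atomic_general
    (h a k : ℕ) (hah : a < h) :
    let w : Fin (k + 1) → ℝ := fun i => if i = 0 then (a : ℝ) else 1
    ((k < h ∧ h ≤ k + a) →
        shapley w h 0 = ((k : ℝ) - h + a + 1) / (k + 1) ∧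
        ∀ i : Fin (k + 1), i ≠ 0 → shapley w h i = ((h : ℝ) - a) / (k * (k + 1))) ∧
    (h ≤ k →
        shapley w h 0 = (a : ℝ) / (k + 1) ∧
        ∀ i : Fin (k + 1), i ≠ 0 → shapley w h i = ((k : ℝ) + 1 - a) / (k * (k + 1))) ∧
    (h ≤ k + a → ∑ i, shapley w h i = 1) := by
  intro w
  have hw0 : w 0 = a := if_pos rfl
  have hw1 : ∀ i, i ≠ 0 → w i = 1 := fun i hi => if_neg hi
  have hlarge := shapley_large_eq (h := h) hw0 hw1
  have hsmall (hwin : h ≤ a + k) {i : Fin (k + 1)} (hi : i ≠ 0) :=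
    shapley_small_eq (h := h) hw0 hw1 (by omega) hwin hi
  refine ⟨fun ⟨hkh, hka⟩ => ?_, fun hhk => ?_, fun hwin => ?_⟩
  · have hcount : ((min h (k + 1) - (h - a) : ℕ) : ℝ) = k - h + a + 1 := by
      rw [show min h (k + 1) - (h - a) = k + a + 1 - h by omega, Nat.cast_sub (by omega)]
      push_cast
      ring
    refine ⟨by rw [hlarge, hcount], fun i hi => ?_⟩
    have hk := natCast_ne_zero_of_fin_ne_zero hi
    rw [hsmall (by omega) hi, hlarge, hcount]
    field_simp
    ring
  · have hcount : min h (k + 1) - (h - a) = a := by omega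
    refine ⟨by rw [hlarge, hcount], fun i hi => ?_⟩
    have hk := natCast_ne_zero_of_fin_ne_zero hi
    rw [hsmall (by omega) hi, hlarge, hcount]
    field_simp
  · exact sum_shapley_eq_one (by exact_mod_cast (by omega : 0 < h))
      (by rw [sum_stakes_eq hw0 hw1]; exact_mod_cast (by omega : h ≤ a + k))

/-- Atomic pool with one large player (stake `a`, `1 < a < h`) and `k` small players of
stake 1: if `k < h` and `k + a ≥ h`, the large player's Shapley value is
`(k - h + a + 1)/(k + 1)` and each small player gets `(h - a)/(k(k+1))`; if `k ≥ h`, the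
large player gets `a/(k+1)` and each small player gets `(k + 1 - a)/(k(k+1))`.
In both (winning) cases the payoffs sum to 1. -/
theorem shapley_one_large_atomic
    (h a k : ℕ) (hk : 0 < k) (ha : 1 < a) (hah : a < h) :
    let w : Fin (k + 1) → ℝ := fun i => if i = 0 then (a : ℝ) else 1
    ((k < h ∧ h ≤ k + a) →
        shapley w h 0 = ((k : ℝ) - h + a + 1) / (k + 1) ∧
        ∀ i : Fin (k + 1), i ≠ 0 → shapley w h i = ((h : ℝ) - a) / (k * (k + 1))) ∧
    (h ≤ k →
        shapley w h 0 = (a : ℝ) / (k + 1) ∧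
        ∀ i : Fin (k + 1), i ≠ 0 → shapley w h i = ((k : ℝ) + 1 - a) / (k * (k + 1))) ∧
    (h ≤ k + a → ∑ i, shapley w h i = 1) :=
  shapley_one_large_atomic_general h a k hah
end

section
/- For integers a, h with 2 ≤ a ≤ h − 1 and h ≤ a² − 2a + 2, let k* = (√(−3a² + h² + 2ah − 2h + 2a + 1) − a + h − 1)/2. Then k* ≤ h − 2. -/
/-- For integers `2 ≤ a ≤ h - 1` with `h ≤ a² - 2a + 2`, the threshold value
`k* = (√(-3a² + h² + 2ah - 2h + 2a + 1) - a + h - 1)/2` satisfies `k* ≤ h - 2`. -/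
theorem kstar_le (a h : ℕ) (ha : 2 ≤ a) (hah : a + 1 ≤ h) (hh : h + 2 * a ≤ a ^ 2 + 2) :
    (Real.sqrt (-3 * (a : ℝ) ^ 2 + (h : ℝ) ^ 2 + 2 * a * h - 2 * h + 2 * a + 1)
        - a + h - 1) / 2 ≤ (h : ℝ) - 2 := by
  have ha' : (2 : ℝ) ≤ a := by exact_mod_cast ha
  have hah' : (a : ℝ) + 1 ≤ h := by exact_mod_cast hah
  have hh' : (h : ℝ) + 2 * a ≤ a ^ 2 + 2 := by exact_mod_cast hh
  have key : Real.sqrt (-3 * (a : ℝ) ^ 2 + (h : ℝ) ^ 2 + 2 * a * h - 2 * h + 2 * a + 1)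
      ≤ (a : ℝ) + h - 3 := by
    rw [show (a : ℝ) + h - 3 = Real.sqrt (((a : ℝ) + h - 3) ^ 2) by
      rw [Real.sqrt_sq (by linarith)]]
    exact Real.sqrt_le_sqrt (by nlinarith)
  linarith
end

section
/- For integers a, h with 2 ≤ a ≤ h − 1 and h ≥ a², the pair (k, l) = (h−1, h+a) satisfies: h(h−1)/(h−a) ≤ l ≤ h(h+1)/(h−a+1), h+1 ≤ l ≤ 2h, and l ≥ h + 1. -/
/-- For integers `2 ≤ a ≤ h - 1` with `h ≥ a²`, the pair `(k, l) = (h-1, h+a)` is feasible: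
`h(h-1)/(h-a) ≤ l ≤ h(h+1)/(h-a+1)` and `h + 1 ≤ l ≤ 2h`. -/
theorem kl_choice_h_plus_a
    (a h : ℕ) (ha : 2 ≤ a) (hah : a + 1 ≤ h) (hh : a ^ 2 ≤ h) :
    (h : ℝ) * ((h : ℝ) - 1) / ((h : ℝ) - a) ≤ (h : ℝ) + a ∧
    (h : ℝ) + a ≤ (h : ℝ) * ((h : ℝ) + 1) / ((h : ℝ) - a + 1) ∧
    (h : ℝ) + 1 ≤ (h : ℝ) + a ∧
    (h : ℝ) + a ≤ 2 * h := by
  have ha' : (2 : ℝ) ≤ a := by exact_mod_cast ha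
  have hah' : (a : ℝ) + 1 ≤ h := by exact_mod_cast hah
  have hh' : (a : ℝ) ^ 2 ≤ h := by exact_mod_cast hh
  have hpos : (0 : ℝ) < (h : ℝ) - a := by linarith
  have hpos2 : (0 : ℝ) < (h : ℝ) - a + 1 := by linarith
  refine ⟨?_, ?_, by linarith, by linarith⟩
  · rw [div_le_iff₀ hpos]; nlinarith
  · rw [le_div_iff₀ hpos2]; nlinarith
end

section
/- For integers a, h with 2 ≤ a ≤ h − 1 and (a²+a)/2 ≤ h ≤ a² − 1, the value l = h + a + 1 satisfies h(h−1)/(h−a) ≤ l ≤ h(h+1)/(h−a+1) and h + 1 ≤ l ≤ 2h. -/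
/-- For integers `2 ≤ a ≤ h - 1` with `(a² + a)/2 ≤ h ≤ a² - 1`, the value `l = h + a + 1`
satisfies `h(h-1)/(h-a) ≤ l ≤ h(h+1)/(h-a+1)` and `h + 1 ≤ l ≤ 2h`. -/
theorem kl_choice_h_plus_a_plus_one
    (a h : ℕ) (ha : 2 ≤ a) (hah : a + 1 ≤ h)
    (hlo : a ^ 2 + a ≤ 2 * h) (hhi : h + 1 ≤ a ^ 2) :
    (h : ℝ) * ((h : ℝ) - 1) / ((h : ℝ) - a) ≤ (h : ℝ) + a + 1 ∧
    (h : ℝ) + a + 1 ≤ (h : ℝ) * ((h : ℝ) + 1) / ((h : ℝ) - a + 1) ∧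
    (h : ℝ) + 1 ≤ (h : ℝ) + a + 1 ∧
    (h : ℝ) + a + 1 ≤ 2 * h := by
  have ha' : (2 : ℝ) ≤ a := by exact_mod_cast ha
  have hah' : (a : ℝ) + 1 ≤ h := by exact_mod_cast hah
  have hlo' : (a : ℝ) ^ 2 + a ≤ 2 * h := by exact_mod_cast hlo
  have hhi' : (h : ℝ) + 1 ≤ a ^ 2 := by exact_mod_cast hhi
  have hpos : (0 : ℝ) < (h : ℝ) - a := by linarith
  have hpos2 : (0 : ℝ) < (h : ℝ) - a + 1 := by linarith
  refine ⟨?_, ?_, by linarith, by linarith⟩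
  · rw [div_le_iff₀ hpos]; nlinarith
  · rw [le_div_iff₀ hpos2]; nlinarith
end

section
/- For integers 2 ≤ a < h and k with h−a ≤ k ≤ h−1, a ≥ h/2, and k−h+a+1 ≥ a(h−a)/k: ((h−a)(h−a+1) + (k−h+a+1)(k−h+a+2))/(2(k+1)(k+2)) ≤ (k−h+a+1)/(k+1). That is, a large player of stake a does not benefit from deviating to another large player's Type-A pool. -/
/-- A large player of stake `a ≥ h/2` does not benefit from deviating to another large
player's Type-A pool: for integers `2 ≤ a < h` and `k` with `h - a ≤ k ≤ h - 1` and
`k - h + a + 1 ≥ a(h-a)/k`, the Shapley value in the two-large-player pool is at most the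
value `(k - h + a + 1)/(k + 1)` in her own pool. -/
theorem no_deviation_to_other_large
    (a h k : ℕ) (ha : 2 ≤ a) (hah : a < h)
    (hk1 : (h : ℝ) - a ≤ k) (hk2 : k + 1 ≤ h) (ha2 : h ≤ 2 * a)
    (hkey : (k : ℝ) - h + a + 1 ≥ (a : ℝ) * ((h : ℝ) - a) / k) :
    (((h : ℝ) - a) * ((h : ℝ) - a + 1)
        + ((k : ℝ) - h + a + 1) * ((k : ℝ) - h + a + 2)) / (2 * ((k : ℝ) + 1) * ((k : ℝ) + 2))
      ≤ ((k : ℝ) - h + a + 1) / ((k : ℝ) + 1) := by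
  have hha : (a:ℝ) + 1 ≤ h := by exact_mod_cast hah
  have hm1 : (1:ℝ) ≤ (h:ℝ) - a := by linarith
  have hk0 : (1:ℝ) ≤ (k:ℝ) := le_trans hm1 hk1
  have hma : (h:ℝ) - a ≤ a := by
    have : (h:ℝ) ≤ 2*a := by exact_mod_cast ha2
    linarith
  have ht1 : (1:ℝ) ≤ (k:ℝ) - h + a + 1 := by linarith
  have htk : (a:ℝ) * ((h:ℝ)-a) ≤ ((k:ℝ)-h+a+1) * k := by
    rw [ge_iff_le, div_le_iff₀ (by linarith)] at hkey
    linarith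
  rw [div_le_div_iff₀ (by positivity) (by positivity)]
  nlinarith [mul_nonneg (sub_nonneg.2 hma) (by linarith : (0:ℝ) ≤ (h:ℝ)-a),
    mul_le_mul_of_nonneg_left htk (by linarith : (0:ℝ) ≤ 1),
    mul_nonneg (by linarith : (0:ℝ) ≤ (k:ℝ)-h+a) (by linarith : (0:ℝ) ≤ (h:ℝ)-a)]
end

section
/- Let ℓ₂ ≥ h, δ ≥ 0, ℓ₁ = ℓ₂ + δ, and let player i with stake aᵢ ≤ ℓ₁ belong to a pool of stake ℓ₁. For any x with 0 < x ≤ (ℓ₂(aᵢ + δ) + δ²)/(2ℓ₂ + 2δ − aᵢ) (and ℓ₁ − x ≥ h), the Sybil payoff (aᵢ − x)/(ℓ₁ − x) + x/(ℓ₂ + x) is at least the original payoff aᵢ/ℓ₁. -/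
/-- Proportional-scheme Sybil attack: with `ℓ₁ = ℓ₂ + δ`, `ℓ₂ ≥ h > aᵢ > 0`, `δ ≥ 0`,
moving any amount `x` with `0 < x ≤ (ℓ₂(aᵢ + δ) + δ²)/(2ℓ₂ + 2δ - aᵢ)` (and `ℓ₁ - x ≥ h`)
from the pool of stake `ℓ₁` to the pool of stake `ℓ₂` yields total Sybil payoff
`(aᵢ - x)/(ℓ₁ - x) + x/(ℓ₂ + x)` at least the original payoff `aᵢ/ℓ₁`. -/
theorem sybil_attack_proportional
    (h a ℓ₁ ℓ₂ δ x : ℝ)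
    (ha : 0 < a) (hah : a < h) (hℓ₂ : h ≤ ℓ₂) (hδ : 0 ≤ δ) (hℓ₁ : ℓ₁ = ℓ₂ + δ)
    (haℓ : a ≤ ℓ₁)
    (hx : 0 < x) (hxle : x ≤ (ℓ₂ * (a + δ) + δ ^ 2) / (2 * ℓ₂ + 2 * δ - a))
    (hrem : h ≤ ℓ₁ - x) :
    a / ℓ₁ ≤ (a - x) / (ℓ₁ - x) + x / (ℓ₂ + x) := by
  subst hℓ₁
  have hd : 0 < 2 * ℓ₂ + 2 * δ - a := by nlinarith
  have hx2 : x * (2 * ℓ₂ + 2 * δ - a) ≤ ℓ₂ * (a + δ) + δ ^ 2 := by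
    rw [le_div_iff₀ hd] at hxle; linarith
  have h1 : 0 < ℓ₂ + δ - x := by nlinarith
  have h2 : 0 < ℓ₂ + x := by nlinarith
  have h3 : 0 < ℓ₂ + δ := by nlinarith
  rw [div_add_div _ _ (ne_of_gt h1) (ne_of_gt h2), div_le_div_iff₀ h3 (mul_pos h1 h2)]
  nlinarith [mul_pos hx h1, mul_pos hx h2, sq_nonneg (x - δ), mul_nonneg hδ hx.le, sq_nonneg x]
end

section
/- Suppose a reward scheme p(s, S) (reward of a player of stake s in pool S, depending only on s and the anonymous stake distribution of S∖{i}) is concave in s on an interval of (0,h), strictly at some point. Then the scheme is not Sybil-proof: there exists a partition with pools S, S₁, S₂ whose residual stake distributions coincide, such that p(a, S) < p(a/2, S₁) + p(a/2, S₂) for some stake a. -/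
/-!
Extending `f = p · D` by `f 0 = 0`, nonnegativity keeps it concave, so the average reward
`f x / x` is antitone. If no player gains by halving her stake, `f x ≥ 2 f (x / 2)`, so the
average reward cannot increase under halving either; iterating the halving to reach any smaller
stake shows that `f x / x` is constant, i.e. `f` is linear on `(0, h)`, which contradicts strict
concavity.
-/

open Set Filter Topology

theorem ConcaveOn.antitoneOn_div_self {f : ℝ → ℝ} {h : ℝ} (hf : ConcaveOn ℝ (Ioo 0 h) f)
    (hf₀ : ∀ x ∈ Ioo 0 h, 0 ≤ f x) : AntitoneOn (fun x => f x / x) (Ioo 0 h) := by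
  intro s hs u hu hsu
  rcases hsu.eq_or_lt with rfl | hsu
  · rfl
  have hchord : ∀ t ∈ Ioo 0 s, (s - t) * f u ≤ (u - t) * f s := fun t ht => by
    have ht' : t ∈ Ioo 0 h := ⟨ht.1, ht.2.trans hs.2⟩
    have := hf.neg.secant_mono_aux1 ht' hu ht.2 hsu
    simp only [Pi.neg_apply] at this
    nlinarith [hf₀ t ht']
  have hlim : s * f u ≤ u * f s := by
    refine le_of_tendsto_of_tendsto (b := 𝓝[>] 0) ?_ ?_
      (mem_of_superset (Ioo_mem_nhdsGT hs.1) hchord)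
    · exact tendsto_nhdsWithin_of_tendsto_nhds <|
        (by fun_prop : Continuous fun t : ℝ => (s - t) * f u).tendsto' 0 _ (by simp)
    · exact tendsto_nhdsWithin_of_tendsto_nhds <|
        (by fun_prop : Continuous fun t : ℝ => (u - t) * f s).tendsto' 0 _ (by simp)
  show f u / u ≤ f s / s
  rw [div_le_div_iff₀ hu.1 hs.1]
  linarith

theorem inv_two_pow_mul_mem_Ioo {h y : ℝ} (hy : y ∈ Ioo 0 h) (n : ℕ) :
    (2⁻¹ : ℝ) ^ n * y ∈ Ioo 0 h :=
  ⟨mul_pos (by positivity) hy.1,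
    (mul_le_of_le_one_left hy.1.le (pow_le_one₀ (by norm_num) (by norm_num))).trans_lt hy.2⟩

theorem apply_inv_two_pow_mul_le {g : ℝ → ℝ} {h : ℝ} (hhalf : ∀ x ∈ Ioo 0 h, g (x / 2) ≤ g x)
    {y : ℝ} (hy : y ∈ Ioo 0 h) (n : ℕ) : g ((2⁻¹ : ℝ) ^ n * y) ≤ g y := by
  induction n with
  | zero => simp
  | succ n ih =>
    calc g ((2⁻¹ : ℝ) ^ (n + 1) * y) = g ((2⁻¹ : ℝ) ^ n * y / 2) := by ring_nf
      _ ≤ g ((2⁻¹ : ℝ) ^ n * y) := hhalf _ (inv_two_pow_mul_mem_Ioo hy n)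
      _ ≤ g y := ih

theorem AntitoneOn.eq_of_apply_half_le {g : ℝ → ℝ} {h : ℝ} (hg : AntitoneOn g (Ioo 0 h))
    (hhalf : ∀ x ∈ Ioo 0 h, g (x / 2) ≤ g x) {x y : ℝ} (hx : x ∈ Ioo 0 h) (hy : y ∈ Ioo 0 h) :
    g x = g y := by
  wlog hxy : x ≤ y generalizing x y
  · exact (this hy hx (le_of_not_ge hxy)).symm
  obtain ⟨n, hn⟩ := exists_pow_lt_of_lt_one (div_pos hx.1 hy.1) (by norm_num : (2⁻¹ : ℝ) < 1)
  have hnx : (2⁻¹ : ℝ) ^ n * y < x := by rwa [lt_div_iff₀ hy.1] at hn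
  exact le_antisymm ((hg (inv_two_pow_mul_mem_Ioo hy n) hx hnx.le).trans
    (apply_inv_two_pow_mul_le hhalf hy n)) (hg hx hy hxy)

theorem concave_scheme_not_sybil_proof_general
    (h : ℝ) (p : ℝ → Multiset ℝ → ℝ)
    (hconc : ∀ D, ConcaveOn ℝ (Set.Ioo 0 h) fun s => p s D)
    (hnonneg : ∀ s D, 0 ≤ p s D)
    (hstrict : ∃ (D : Multiset ℝ) (s₁ s₂ l : ℝ), s₁ ∈ Set.Ioo 0 h ∧ s₂ ∈ Set.Ioo 0 h ∧
        0 < l ∧ l < 1 ∧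
        l * p s₁ D + (1 - l) * p s₂ D < p (l * s₁ + (1 - l) * s₂) D) :
    ∃ (a : ℝ) (D : Multiset ℝ), a ∈ Set.Ioo 0 h ∧ p a D < p (a / 2) D + p (a / 2) D := by
  by_contra! hsybil
  obtain ⟨D, s₁, s₂, l, hs₁, hs₂, hl₀, hl₁, hlt⟩ := hstrict
  have hanti : AntitoneOn (fun x => p x D / x) (Ioo 0 h) :=
    (hconc D).antitoneOn_div_self fun x _ => hnonneg x D
  have hhalf : ∀ x ∈ Ioo 0 h, p (x / 2) D / (x / 2) ≤ p x D / x := fun x hx => by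
    rw [div_le_div_iff₀ (half_pos hx.1) hx.1]
    nlinarith [hsybil x D hx, hx.1]
  have hlin : ∀ x ∈ Ioo 0 h, p x D = p s₁ D / s₁ * x := fun x hx => by
    rw [hanti.eq_of_apply_half_le hhalf hs₁ hx, div_mul_cancel₀ _ hx.1.ne']
  have hmem : l * s₁ + (1 - l) * s₂ ∈ Ioo 0 h :=
    convex_Ioo 0 h hs₁ hs₂ hl₀.le (sub_nonneg.2 hl₁.le) (add_sub_cancel l 1)
  rw [hlin _ hs₁, hlin _ hs₂, hlin _ hmem] at hlt
  linarith

/-- An anonymous reward scheme `p s D` (reward of a player of stake `s` in a pool whose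
other members' stakes form the multiset `D`) that is nonnegative and concave in the stake
on `(0, h)`, strictly at some point, is not Sybil-proof: some player of stake `a` strictly
gains by splitting her stake in half across two pools with the same residual stake
distribution `D`. -/
theorem concave_scheme_not_sybil_proof
    (h : ℝ) (hh : 0 < h) (p : ℝ → Multiset ℝ → ℝ)
    (hconc : ∀ D, ConcaveOn ℝ (Set.Ioo 0 h) fun s => p s D)
    (hnonneg : ∀ s D, 0 ≤ p s D)
    (hstrict : ∃ (D : Multiset ℝ) (s₁ s₂ l : ℝ), s₁ ∈ Set.Ioo 0 h ∧ s₂ ∈ Set.Ioo 0 h ∧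
        0 < l ∧ l < 1 ∧
        l * p s₁ D + (1 - l) * p s₂ D < p (l * s₁ + (1 - l) * s₂) D) :
    ∃ (a : ℝ) (D : Multiset ℝ), a ∈ Set.Ioo 0 h ∧ p a D < p (a / 2) D + p (a / 2) D :=
  concave_scheme_not_sybil_proof_general h p hconc hnonneg hstrict
end
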